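/- arXiv:2010.05854 — 2 statements merged into one kernel-verified Lean document; each statement's English description precedes it below -/
import Mathlib

section
/- Let n ≥ 1 be an integer, μ > 0 a real number, and for (z,w) ∈ M_{n,μ} set P(z) = ∏_{j=1}^n (1−|z_j|²)^μ and h(z,w) = (μ P(z)/(P(z)−|w|²)) · ∑_{j=1}^n |z_j|²/(1−|z_j|²) + |w|²/(P(z)−|w|²). Then for every point p in the topological frontier of M_{n,μ} in ℂ^{n+1}, the function h(z,w) tends to +∞ as (z,w) tends to p within M_{n,μ}. -/
/-- `∏ j, (1 - |z j|²)^μ`. -/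
noncomputable def prodP (n : ℕ) (μ : ℝ) (z : Fin n → ℂ) : ℝ :=
  ∏ j, (1 - ‖z j‖ ^ 2) ^ μ

/-- The Hartogs–polydisc `M_{n,μ}`. -/
def hartogsPolydisc (n : ℕ) (μ : ℝ) : Set ((Fin n → ℂ) × ℂ) :=
  {p | (∀ j, ‖p.1 j‖ < 1) ∧ ‖p.2‖ ^ 2 < prodP n μ p.1}

/-- The boundary-divergence function `h`. -/
noncomputable def boundaryFun (n : ℕ) (μ : ℝ) (p : (Fin n → ℂ) × ℂ) : ℝ :=
  μ * prodP n μ p.1 / (prodP n μ p.1 - ‖p.2‖ ^ 2) *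
      ∑ j, ‖p.1 j‖ ^ 2 / (1 - ‖p.1 j‖ ^ 2) +
    ‖p.2‖ ^ 2 / (prodP n μ p.1 - ‖p.2‖ ^ 2)

/-! The closure of `M_{n,μ}` lies in `{|z_j| ≤ 1, |w|² ≤ P(z)}`, so a frontier point
either has some `|z_j| = 1` or satisfies `|w|² = P(z) > 0`. All terms of `h` are nonnegative
and `P/(P - |w|²) ≥ 1`, hence `h ≥ μ |z_j|²/(1 - |z_j|²)` and `h ≥ |w|²/(P - |w|²)`; in the
first case the former and in the second case the latter is a positive continuous quantity
divided by one that tends to `0⁺`. -/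

open Filter Topology

lemma Filter.Tendsto.div_nhdsWithin_atTop {X : Type*} [TopologicalSpace X] {f g : X → ℝ}
    {s : Set X} {p : X} (hf : ContinuousAt f p) (hg : ContinuousAt g p) (hfp : 0 < f p)
    (hgp : g p = 0) (hs : ∀ x ∈ s, 0 < g x) :
    Tendsto (fun x => f x / g x) (𝓝[s] p) atTop := by
  have hg' : Tendsto g (𝓝[s] p) (𝓝[>] 0) :=
    tendsto_nhdsWithin_of_tendsto_nhds_of_eventually_within _
      (hgp ▸ hg.mono_left nhdsWithin_le_nhds) (eventually_nhdsWithin_of_forall hs)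
  simpa only [div_eq_mul_inv, Pi.inv_apply] using
    (hf.mono_left nhdsWithin_le_nhds).pos_mul_atTop hfp hg'.inv_tendsto_nhdsGT_zero

lemma one_sub_sq_pos_of_norm_lt_one {z : ℂ} (hz : ‖z‖ < 1) : 0 < 1 - ‖z‖ ^ 2 :=
  sub_pos.2 (pow_lt_one₀ (norm_nonneg z) hz two_ne_zero)

lemma norm_sq_div_one_sub_sq_nonneg {z : ℂ} (hz : ‖z‖ < 1) : 0 ≤ ‖z‖ ^ 2 / (1 - ‖z‖ ^ 2) :=
  div_nonneg (sq_nonneg _) (one_sub_sq_pos_of_norm_lt_one hz).le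

section HartogsPolydisc

variable {n : ℕ} {μ : ℝ}

lemma continuous_prodP (hμ : 0 ≤ μ) : Continuous (prodP n μ) :=
  continuous_finsetProd _ fun j _ =>
    (continuous_const.sub ((continuous_norm.comp (continuous_apply j)).pow 2)).rpow_const
      fun _ => Or.inr hμ

lemma prodP_pos {z : Fin n → ℂ} (hz : ∀ j, ‖z j‖ < 1) : 0 < prodP n μ z :=
  Finset.prod_pos fun j _ => Real.rpow_pos_of_pos (one_sub_sq_pos_of_norm_lt_one (hz j)) μ

lemma isOpen_hartogsPolydisc (hμ : 0 ≤ μ) : IsOpen (hartogsPolydisc n μ) := by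
  rw [hartogsPolydisc, Set.ofPred_and, Set.ofPred_forall]
  exact (isOpen_iInter_of_finite fun j =>
      isOpen_lt (continuous_norm.comp ((continuous_apply j).comp continuous_fst))
        continuous_const).inter
    (isOpen_lt ((continuous_norm.comp continuous_snd).pow 2)
      ((continuous_prodP hμ).comp continuous_fst))

lemma closure_hartogsPolydisc_subset (hμ : 0 ≤ μ) :
    closure (hartogsPolydisc n μ) ⊆ {p | (∀ j, ‖p.1 j‖ ≤ 1) ∧ ‖p.2‖ ^ 2 ≤ prodP n μ p.1} := by
  refine closure_minimal (fun p hp => ⟨fun j => (hp.1 j).le, hp.2.le⟩) ?_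
  rw [Set.ofPred_and, Set.ofPred_forall]
  exact (isClosed_iInter fun j =>
      isClosed_le (continuous_norm.comp ((continuous_apply j).comp continuous_fst))
        continuous_const).inter
    (isClosed_le ((continuous_norm.comp continuous_snd).pow 2)
      ((continuous_prodP hμ).comp continuous_fst))

lemma exists_norm_eq_one_or_of_mem_frontier (hμ : 0 ≤ μ) {p : (Fin n → ℂ) × ℂ}
    (hp : p ∈ frontier (hartogsPolydisc n μ)) :
    (∃ j, ‖p.1 j‖ = 1) ∨ (∀ j, ‖p.1 j‖ < 1) ∧ ‖p.2‖ ^ 2 = prodP n μ p.1 := by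
  rw [(isOpen_hartogsPolydisc hμ).frontier_eq] at hp
  obtain ⟨hp_closure, hp_not_mem⟩ := hp
  obtain ⟨hz, hw⟩ := closure_hartogsPolydisc_subset hμ hp_closure
  by_cases hz_lt : ∀ j, ‖p.1 j‖ < 1
  · exact Or.inr ⟨hz_lt, hw.antisymm (not_lt.1 fun hw_lt => hp_not_mem ⟨hz_lt, hw_lt⟩)⟩
  · obtain ⟨j, hj⟩ := not_forall.1 hz_lt
    exact Or.inl ⟨j, (hz j).antisymm (not_lt.1 hj)⟩

lemma sum_norm_sq_div_nonneg {z : Fin n → ℂ} (hz : ∀ j, ‖z j‖ < 1) :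
    0 ≤ ∑ j, ‖z j‖ ^ 2 / (1 - ‖z j‖ ^ 2) :=
  Finset.sum_nonneg fun j _ => norm_sq_div_one_sub_sq_nonneg (hz j)

lemma norm_sq_div_le_boundaryFun (hμ : 0 ≤ μ) {q : (Fin n → ℂ) × ℂ}
    (hq : q ∈ hartogsPolydisc n μ) :
    ‖q.2‖ ^ 2 / (prodP n μ q.1 - ‖q.2‖ ^ 2) ≤ boundaryFun n μ q := by
  have hP := prodP_pos (μ := μ) hq.1
  have hD : 0 < prodP n μ q.1 - ‖q.2‖ ^ 2 := sub_pos.2 hq.2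
  have hS := sum_norm_sq_div_nonneg hq.1
  exact le_add_of_nonneg_left (by positivity)

lemma mul_norm_sq_div_le_boundaryFun (hμ : 0 ≤ μ) {q : (Fin n → ℂ) × ℂ}
    (hq : q ∈ hartogsPolydisc n μ) (j : Fin n) :
    μ * ‖q.1 j‖ ^ 2 / (1 - ‖q.1 j‖ ^ 2) ≤ boundaryFun n μ q := by
  have hP := prodP_pos (μ := μ) hq.1
  have hD : 0 < prodP n μ q.1 - ‖q.2‖ ^ 2 := sub_pos.2 hq.2
  have hS := sum_norm_sq_div_nonneg hq.1
  have hj : ‖q.1 j‖ ^ 2 / (1 - ‖q.1 j‖ ^ 2) ≤ ∑ i, ‖q.1 i‖ ^ 2 / (1 - ‖q.1 i‖ ^ 2) :=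
    Finset.single_le_sum (f := fun i => ‖q.1 i‖ ^ 2 / (1 - ‖q.1 i‖ ^ 2))
      (fun i _ => norm_sq_div_one_sub_sq_nonneg (hq.1 i)) (Finset.mem_univ j)
  have hratio : 1 ≤ prodP n μ q.1 / (prodP n μ q.1 - ‖q.2‖ ^ 2) :=
    (one_le_div hD).2 (sub_le_self _ (sq_nonneg _))
  calc μ * ‖q.1 j‖ ^ 2 / (1 - ‖q.1 j‖ ^ 2)
      ≤ μ * ∑ i, ‖q.1 i‖ ^ 2 / (1 - ‖q.1 i‖ ^ 2) := by
        rw [mul_div_assoc]; exact mul_le_mul_of_nonneg_left hj hμ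
    _ ≤ μ * prodP n μ q.1 / (prodP n μ q.1 - ‖q.2‖ ^ 2) *
          ∑ i, ‖q.1 i‖ ^ 2 / (1 - ‖q.1 i‖ ^ 2) := by
        rw [mul_div_assoc]
        exact mul_le_mul_of_nonneg_right (le_mul_of_one_le_right hμ hratio) hS
    _ ≤ boundaryFun n μ q := le_add_of_nonneg_right (by positivity)

end HartogsPolydisc

theorem stmt_6_general (n : ℕ) (μ : ℝ) (hμ : 0 < μ)
    (p : (Fin n → ℂ) × ℂ) (hp : p ∈ frontier (hartogsPolydisc n μ)) :
    Filter.Tendsto (boundaryFun n μ) (nhdsWithin p (hartogsPolydisc n μ)) Filter.atTop := by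
  have hz_cont : ∀ j, Continuous fun q : (Fin n → ℂ) × ℂ => ‖q.1 j‖ ^ 2 := fun j =>
    (continuous_norm.comp ((continuous_apply j).comp continuous_fst)).pow 2
  have hw_cont : Continuous fun q : (Fin n → ℂ) × ℂ => ‖q.2‖ ^ 2 :=
    (continuous_norm.comp continuous_snd).pow 2
  have hP_cont : Continuous fun q : (Fin n → ℂ) × ℂ => prodP n μ q.1 :=
    (continuous_prodP hμ.le).comp continuous_fst
  rcases exists_norm_eq_one_or_of_mem_frontier hμ.le hp with ⟨j, hj⟩ | ⟨hz, hw⟩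
  · refine tendsto_atTop_mono' _
      (eventually_nhdsWithin_of_forall fun q hq => mul_norm_sq_div_le_boundaryFun hμ.le hq j) ?_
    exact Tendsto.div_nhdsWithin_atTop ((continuous_const.mul (hz_cont j)).continuousAt)
      ((continuous_const.sub (hz_cont j)).continuousAt) (by simpa [hj] using hμ)
      (by simp [hj]) fun q hq => one_sub_sq_pos_of_norm_lt_one (hq.1 j)
  · refine tendsto_atTop_mono' _
      (eventually_nhdsWithin_of_forall fun q hq => norm_sq_div_le_boundaryFun hμ.le hq) ?_
    exact Tendsto.div_nhdsWithin_atTop hw_cont.continuousAt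
      (hP_cont.sub hw_cont).continuousAt (hw ▸ prodP_pos hz) (sub_eq_zero.2 hw.symm)
      fun q hq => sub_pos.2 hq.2

theorem stmt_6 (n : ℕ) (hn : 1 ≤ n) (μ : ℝ) (hμ : 0 < μ)
    (p : (Fin n → ℂ) × ℂ) (hp : p ∈ frontier (hartogsPolydisc n μ)) :
    Filter.Tendsto (boundaryFun n μ) (nhdsWithin p (hartogsPolydisc n μ)) Filter.atTop :=
  stmt_6_general n μ hμ p hp
end

section
/- Let n ≥ 1 be an integer and μ > 0 real. For every (z,w) ∈ ℂ^{n+1}, the Hermitian matrix H(z,w) defined in the context is positive definite. -/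
/-- `∏ j, (1 + |z j|²)^μ`. -/
noncomputable def prodPStar (n : ℕ) (μ : ℝ) (z : Fin n → ℂ) : ℝ :=
  ∏ j, (1 + ‖z j‖ ^ 2) ^ μ

/-- The complex Hessian `H` of the dual potential
`φ*_{n,μ}(z,w) = log(∏ j (1+|z_j|²)^μ + |w|²)`, as an `(n+1)×(n+1)` matrix indexed
by `Fin n ⊕ Unit` (the `Unit` index corresponding to the `w` variable). -/
noncomputable def Hmat (n : ℕ) (μ : ℝ) (z : Fin n → ℂ) (w : ℂ) :
    Matrix (Fin n ⊕ Unit) (Fin n ⊕ Unit) ℂ :=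
  fun i j =>
    match i, j with
    | Sum.inl a, Sum.inl b =>
        (μ * prodPStar n μ z : ℝ) *
            ((prodPStar n μ z + ‖w‖ ^ 2 : ℝ) * (if a = b then 1 else 0) +
              (μ * ‖w‖ ^ 2 : ℝ) * (starRingEnd ℂ) (z a) * z b) /
          ((1 + ‖z a‖ ^ 2 : ℝ) * (1 + ‖z b‖ ^ 2 : ℝ) *
            ((prodPStar n μ z + ‖w‖ ^ 2 : ℝ)) ^ 2)
    | Sum.inl a, Sum.inr _ =>
        -((μ : ℂ) * w * (starRingEnd ℂ) (z a) * (prodPStar n μ z : ℝ)) /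
          ((1 + ‖z a‖ ^ 2 : ℝ) *
            ((prodPStar n μ z + ‖w‖ ^ 2 : ℝ)) ^ 2)
    | Sum.inr _, Sum.inl b =>
        -((μ : ℂ) * (starRingEnd ℂ) w * z b * (prodPStar n μ z : ℝ)) /
          ((1 + ‖z b‖ ^ 2 : ℝ) *
            ((prodPStar n μ z + ‖w‖ ^ 2 : ℝ)) ^ 2)
    | Sum.inr _, Sum.inr _ =>
        (prodPStar n μ z : ℝ) / ((prodPStar n μ z + ‖w‖ ^ 2 : ℝ)) ^ 2

/-!
`H = diag(d) + c · l̄ lᵀ` with `d_j = μP / ((P + |w|²)(1 + |z_j|²)²)`, `d_{n+1} = 0`,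
`c = P / (P + |w|²)²`, `l_j = -μ w̄ z_j / (1 + |z_j|²)` and `l_{n+1} = 1`. Both summands are
positive semidefinite, so `H` is positive definite as soon as their kernels meet only in `0`: a
vector killed by `diag(d)` vanishes off the last coordinate since `d_j > 0` there, and then
`l ⬝ x = x_{n+1}`, so it is killed by `l̄ lᵀ` only if it vanishes.
-/

open Matrix

namespace Matrix

open scoped ComplexOrder

variable {𝕜 ι : Type*} [RCLike 𝕜] [Fintype ι]

theorem PosSemidef.posDef_add {A B : Matrix ι ι 𝕜} (hA : A.PosSemidef) (hB : B.PosSemidef)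
    (hker : ∀ x, A *ᵥ x = 0 → B *ᵥ x = 0 → x = 0) : (A + B).PosDef := by
  refine .of_dotProduct_mulVec_pos (hA.add hB).isHermitian fun x hx => ?_
  rw [add_mulVec, dotProduct_add]
  refine lt_of_le_of_ne (add_nonneg (hA.dotProduct_mulVec_nonneg x)
    (hB.dotProduct_mulVec_nonneg x)) fun h => hx (hker x ?_ ?_)
  all_goals
    obtain ⟨hAx, hBx⟩ := (add_eq_zero_iff_of_nonneg (hA.dotProduct_mulVec_nonneg x)
      (hB.dotProduct_mulVec_nonneg x)).1 h.symm
  · exact (hA.dotProduct_mulVec_zero_iff x).1 hAx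
  · exact (hB.dotProduct_mulVec_zero_iff x).1 hBx

theorem posDef_diagonal_add_smul_vecMulVec [DecidableEq ι] {d : ι → 𝕜} {c : 𝕜} {l : ι → 𝕜}
    (i₀ : ι) (hd : 0 ≤ d) (hd_pos : ∀ i ≠ i₀, 0 < d i) (hc : 0 < c) (hl : l i₀ ≠ 0) :
    (diagonal d + c • vecMulVec (star l) l).PosDef := by
  refine (PosSemidef.diagonal hd).posDef_add ((posSemidef_vecMulVec_star_self l).smul hc.le)
    fun x hdx hlx => funext fun i => ?_
  have hx : ∀ i ≠ i₀, x i = 0 := fun i hi => by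
    simpa [mulVec_diagonal, (hd_pos i hi).ne'] using congrFun hdx i
  have hdot : l ⬝ᵥ x = l i₀ * x i₀ :=
    Finset.sum_eq_single i₀ (fun i _ hi => by simp [hx i hi]) (by simp)
  have hx₀ : x i₀ = 0 := by
    simpa [smul_mulVec, vecMulVec_mulVec, hdot, hc.ne', hl] using congrFun hlx i₀
  obtain rfl | hi := eq_or_ne i i₀
  exacts [hx₀, hx i hi]

end Matrix

lemma prodPStar_pos (n : ℕ) (μ : ℝ) (z : Fin n → ℂ) : 0 < prodPStar n μ z :=
  Finset.prod_pos fun _ _ => Real.rpow_pos_of_pos (by positivity) μ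

noncomputable def hmatDiag (n : ℕ) (μ : ℝ) (z : Fin n → ℂ) (w : ℂ) : Fin n ⊕ Unit → ℂ :=
  Sum.elim
    (fun j => (μ * prodPStar n μ z / ((prodPStar n μ z + ‖w‖ ^ 2) * (1 + ‖z j‖ ^ 2) ^ 2) : ℝ)) 0

noncomputable def hmatVec (n : ℕ) (μ : ℝ) (z : Fin n → ℂ) (w : ℂ) : Fin n ⊕ Unit → ℂ :=
  Sum.elim (fun j => -(μ * starRingEnd ℂ w * z j) / (1 + ‖z j‖ ^ 2 : ℝ)) 1

noncomputable def hmatScale (n : ℕ) (μ : ℝ) (z : Fin n → ℂ) (w : ℂ) : ℂ :=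
  (prodPStar n μ z / (prodPStar n μ z + ‖w‖ ^ 2) ^ 2 : ℝ)

lemma Hmat_eq_diagonal_add_smul_vecMulVec (n : ℕ) (μ : ℝ) (z : Fin n → ℂ) (w : ℂ) :
    Hmat n μ z w = diagonal (hmatDiag n μ z w) +
      hmatScale n μ z w • vecMulVec (star (hmatVec n μ z w)) (hmatVec n μ z w) := by
  have hD : (prodPStar n μ z : ℂ) + ‖w‖ ^ 2 ≠ 0 := by
    exact_mod_cast (add_pos_of_pos_of_nonneg (prodPStar_pos n μ z) (sq_nonneg ‖w‖)).ne'
  have hz (j : Fin n) : (1 : ℂ) + ‖z j‖ ^ 2 ≠ 0 := by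
    exact_mod_cast (by positivity : (0 : ℝ) < 1 + ‖z j‖ ^ 2).ne'
  have hw : starRingEnd ℂ w * w = ‖w‖ ^ 2 := by rw [Complex.conj_mul']
  ext (a | ⟨⟩) (b | ⟨⟩) <;>
    simp only [Hmat, hmatDiag, hmatVec, hmatScale, Matrix.add_apply, Matrix.smul_apply,
      diagonal_apply, vecMulVec_apply, Pi.star_apply, Sum.elim_inl, Sum.elim_inr, Sum.inl.injEq,
      reduceCtorEq, Pi.zero_apply, Pi.one_apply, RCLike.star_def, smul_eq_mul, map_div₀, map_neg,
      map_mul, map_one, Complex.conj_ofReal, Complex.conj_conj, Complex.ofReal_mul,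
      Complex.ofReal_add, Complex.ofReal_pow, Complex.ofReal_div, Complex.ofReal_one, mul_ite,
      mul_one, mul_zero, zero_add, map_add, map_pow, if_true, if_false]
  · split_ifs with hab
    · subst hab; field_simp; rw [← hw]; ring
    · field_simp; rw [← hw]; ring
  all_goals field_simp

open scoped ComplexOrder in
theorem stmt_9_general (n : ℕ) (μ : ℝ) (hμ : 0 < μ)
    (z : Fin n → ℂ) (w : ℂ) :
    (Hmat n μ z w).PosDef := by
  have hP := prodPStar_pos n μ z
  have hdiag_pos (j : Fin n) : 0 < hmatDiag n μ z w (.inl j) :=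
    Complex.zero_lt_real.2 (by positivity)
  rw [Hmat_eq_diagonal_add_smul_vecMulVec]
  refine posDef_diagonal_add_smul_vecMulVec (Sum.inr ()) ?_ ?_
    (Complex.zero_lt_real.2 (by positivity)) (by simp [hmatVec])
  · rintro (j | ⟨⟩)
    · exact (hdiag_pos j).le
    · exact le_rfl
  · rintro (j | ⟨⟩) hj
    · exact hdiag_pos j
    · exact absurd rfl hj

open scoped ComplexOrder in
theorem stmt_9 (n : ℕ) (hn : 1 ≤ n) (μ : ℝ) (hμ : 0 < μ)
    (z : Fin n → ℂ) (w : ℂ) :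
    (Hmat n μ z w).PosDef :=
  stmt_9_general n μ hμ z w
end
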